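/- arXiv:1707.03593 — 2 statements merged into one kernel-verified Lean document; each statement's English description precedes it below -/
import Mathlib

section
/- Ignoring the competing risk of death overestimates the disease risk: with 0 ≤ α_j ≤ β_j and α_j, β_j as above, for every k, ∑_{j=1}^k (α_j/β_j)·(S_β(c_{j−1}) − S_β(c_j)) ≤ 1 − S_α(c_k), where S_α(c_k) = exp(−∑_{j=1}^k α_j·(c_j − c_{j−1})). -/
lemma aux_conv (x y : ℝ) (hy : 0 ≤ y) (hxy : y ≤ x) (hx : 0 < x) :
    (y / x) * (1 - Real.exp (-x)) ≤ 1 - Real.exp (-y) := by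
  have h1 : (0:ℝ) ≤ y / x := by positivity
  have h2 : (0:ℝ) ≤ 1 - y / x := by
    have : y / x ≤ 1 := by rw [div_le_one hx]; exact hxy
    linarith
  have h := convexOn_exp.2 (Set.mem_univ (-x)) (Set.mem_univ 0) h1 h2 (by ring)
  simp only [smul_eq_mul, mul_zero, add_zero, Real.exp_zero, mul_one] at h
  have hxne : x ≠ 0 := ne_of_gt hx
  have heq : y / x * -x = -y := by field_simp
  rw [heq] at h
  nlinarith [h]

theorem stmt6 (N : ℕ) (c : ℕ → ℝ) (hc : ∀ j < N, c j < c (j + 1))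
    (α β : ℕ → ℝ) (hαβ : ∀ j, 1 ≤ j → j ≤ N → 0 ≤ α j ∧ α j ≤ β j)
    (Sα Sβ : ℕ → ℝ)
    (hSα : ∀ k, Sα k = Real.exp (-∑ j ∈ Finset.Icc 1 k, α j * (c j - c (j - 1))))
    (hSβ : ∀ k, Sβ k = Real.exp (-∑ j ∈ Finset.Icc 1 k, β j * (c j - c (j - 1)))) :
    ∀ k ≤ N, ∑ j ∈ Finset.Icc 1 k, (α j / β j) * (Sβ (j - 1) - Sβ j) ≤ 1 - Sα k := by
  intro k hk
  induction k with
  | zero => simp [hSα 0]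
  | succ n ih =>
    have hnN : n ≤ N := Nat.le_of_succ_le hk
    have hIH := ih hnN
    have hΔ : 0 < c (n + 1) - c n := sub_pos.mpr (hc n (Nat.lt_of_succ_le hk))
    obtain ⟨hα0, hαβn⟩ := hαβ (n + 1) (Nat.le_add_left 1 n) hk
    have hβ0 : 0 ≤ β (n + 1) := le_trans hα0 hαβn
    -- split sum
    rw [Finset.sum_Icc_succ_top (Nat.le_add_left 1 n)]
    simp only [Nat.add_sub_cancel]
    -- express Sα (n+1) and Sβ (n+1)
    have hSαs : Sα (n + 1) = Sα n * Real.exp (-(α (n + 1) * (c (n + 1) - c n))) := by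
      rw [hSα, hSα, Finset.sum_Icc_succ_top (Nat.le_add_left 1 n), ← Real.exp_add]
      simp only [Nat.add_sub_cancel]
      congr 1
      ring
    have hSβs : Sβ (n + 1) = Sβ n * Real.exp (-(β (n + 1) * (c (n + 1) - c n))) := by
      rw [hSβ, hSβ, Finset.sum_Icc_succ_top (Nat.le_add_left 1 n), ← Real.exp_add]
      simp only [Nat.add_sub_cancel]
      congr 1
      ring
    have hSαpos : 0 < Sα n := by rw [hSα]; exact Real.exp_pos _
    have hSβpos : 0 < Sβ n := by rw [hSβ]; exact Real.exp_pos _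
    -- Sβ n ≤ Sα n
    have hSle : Sβ n ≤ Sα n := by
      rw [hSα, hSβ]
      apply Real.exp_le_exp.mpr
      apply neg_le_neg
      apply Finset.sum_le_sum
      intro j hj
      simp only [Finset.mem_Icc] at hj
      obtain ⟨h1j, hjn⟩ := hj
      obtain ⟨ha, hab⟩ := hαβ j h1j (le_trans hjn hnN)
      have : 0 ≤ c j - c (j - 1) := by
        have : j - 1 < N := lt_of_lt_of_le (Nat.sub_lt (Nat.lt_of_lt_of_le Nat.zero_lt_one h1j) Nat.one_pos) (le_trans hjn hnN)
        have h' := hc (j - 1) this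
        rw [Nat.sub_add_cancel h1j] at h'
        linarith
      nlinarith
    -- key step inequality
    have hkey : α (n + 1) / β (n + 1) * (Sβ n - Sβ (n + 1)) ≤ Sα n - Sα (n + 1) := by
      rw [hSαs, hSβs]
      have hαΔ : 0 ≤ α (n + 1) * (c (n + 1) - c n) := by positivity
      have hexα : Real.exp (-(α (n + 1) * (c (n + 1) - c n))) ≤ 1 := by
        rw [Real.exp_le_one_iff]; linarith
      rcases eq_or_lt_of_le hβ0 with hβz | hβpos
      · -- β = 0 then α = 0
        have hαz : α (n + 1) = 0 := le_antisymm (by rw [← hβz] at hαβn; exact hαβn) hα0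
        rw [hαz, ← hβz]
        simp
      · have hβΔ : 0 < β (n + 1) * (c (n + 1) - c n) := by positivity
        have hle : α (n + 1) * (c (n + 1) - c n) ≤ β (n + 1) * (c (n + 1) - c n) := by nlinarith
        have h := aux_conv (β (n + 1) * (c (n + 1) - c n)) (α (n + 1) * (c (n + 1) - c n)) hαΔ hle hβΔ
        have hdiv : α (n + 1) * (c (n + 1) - c n) / (β (n + 1) * (c (n + 1) - c n)) = α (n + 1) / β (n + 1) := by
          rw [mul_div_mul_right _ _ (ne_of_gt hΔ)]
        rw [hdiv] at h
        have : Sβ n - Sβ n * Real.exp (-(β (n + 1) * (c (n + 1) - c n)))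
            = Sβ n * (1 - Real.exp (-(β (n + 1) * (c (n + 1) - c n)))) := by ring
        rw [this]
        have h2 : α (n + 1) / β (n + 1) * (Sβ n * (1 - Real.exp (-(β (n + 1) * (c (n + 1) - c n)))))
            = Sβ n * (α (n + 1) / β (n + 1) * (1 - Real.exp (-(β (n + 1) * (c (n + 1) - c n))))) := by ring
        rw [h2]
        calc Sβ n * (α (n + 1) / β (n + 1) * (1 - Real.exp (-(β (n + 1) * (c (n + 1) - c n)))))
            ≤ Sβ n * (1 - Real.exp (-(α (n + 1) * (c (n + 1) - c n)))) := by
              apply mul_le_mul_of_nonneg_left h (le_of_lt hSβpos)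
          _ ≤ Sα n * (1 - Real.exp (-(α (n + 1) * (c (n + 1) - c n)))) := by
              apply mul_le_mul_of_nonneg_right hSle; linarith
          _ = Sα n - Sα n * Real.exp (-(α (n + 1) * (c (n + 1) - c n))) := by ring
    linarith
end

section
/- Sum-product factorization over a separator: let V be a finite index set, (X_v)_{v∈V} variables over a finite state space, and let the joint weight be a product ∏_{v∈V} K_v of nonnegative factors. Suppose V splits as a disjoint union U* ⊎ V* and there is a set of variables S such that every factor K_v with v ∈ U* depends only on variables in U, every factor with v ∈ V* depends only on variables in W, and U ∩ W = S. Then ∑_{all variables except S} ∏_{v∈V} K_v = (∑_{U \ S} ∏_{v∈U*} K_v) · (∑_{W \ S} ∏_{v∈V*} K_v). -/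
theorem stmt12 {A S B ι : Type*} [Fintype A] [Fintype B] [Fintype S]
    [Fintype ι] [DecidableEq ι] [Inhabited A] [Inhabited B]
    (ι₁ ι₂ : Finset ι) (hdisj : Disjoint ι₁ ι₂) (hunion : ι₁ ∪ ι₂ = Finset.univ)
    (K : ι → A × S × B → ℝ) (hK : ∀ i x, 0 ≤ K i x)
    -- factors indexed by ι₁ depend only on the (U = A × S) variables
    (hU : ∀ i ∈ ι₁, ∀ (a : A) (s : S) (b b' : B), K i (a, s, b) = K i (a, s, b'))
    -- factors indexed by ι₂ depend only on the (W = S × B) variables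
    (hW : ∀ i ∈ ι₂, ∀ (a a' : A) (s : S) (b : B), K i (a, s, b) = K i (a', s, b)) :
    ∀ s : S,
      ∑ a : A, ∑ b : B, ∏ i : ι, K i (a, s, b)
        = (∑ a : A, ∏ i ∈ ι₁, K i (a, s, default))
          * (∑ b : B, ∏ i ∈ ι₂, K i (default, s, b)) := by
  intro s
  have key : ∀ (a : A) (b : B),
      ∏ i : ι, K i (a, s, b)
        = (∏ i ∈ ι₁, K i (a, s, default)) * (∏ i ∈ ι₂, K i (default, s, b)) := by
    intro a b
    rw [← hunion, Finset.prod_union hdisj]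
    congr 1
    · exact Finset.prod_congr rfl fun i hi => hU i hi a s b default
    · exact Finset.prod_congr rfl fun i hi => hW i hi a default s b
  simp only [key]
  rw [← Finset.sum_mul_sum]
end
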